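/- arXiv:2203.09045 — 5 statements merged into one kernel-verified Lean document; each statement's English description precedes it below -/
import Mathlib

section
/- A Tychonoff space X is realcompact (every stable family of closed sets with the finite intersection property is fixed) if and only if every prime z-filter on X with the countable intersection property is fixed, if and only if every z-ultrafilter on X with the countable intersection property is fixed. -/
open Set Topology

variable {X : Type*}

def IsZeroSet [TopologicalSpace X] (Z : Set X) : Prop :=
  ∃ f : X → ℝ, Continuous f ∧ Z = {x | f x = 0}

def IsZFilter [TopologicalSpace X] (F : Set (Set X)) : Prop :=
  (∀ Z ∈ F, IsZeroSet Z) ∧ (∅ : Set X) ∉ F ∧ Set.univ ∈ F ∧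
  (∀ Z₁ ∈ F, ∀ Z₂ ∈ F, Z₁ ∩ Z₂ ∈ F) ∧
  (∀ Z₁ ∈ F, ∀ Z₂ : Set X, IsZeroSet Z₂ → Z₁ ⊆ Z₂ → Z₂ ∈ F)

def IsZUltrafilter [TopologicalSpace X] (F : Set (Set X)) : Prop :=
  IsZFilter F ∧ ∀ G : Set (Set X), IsZFilter G → F ⊆ G → G = F

def IsPrimeZFilter [TopologicalSpace X] (F : Set (Set X)) : Prop :=
  IsZFilter F ∧ ∀ Z₁ Z₂ : Set X, IsZeroSet Z₁ → IsZeroSet Z₂ → Z₁ ∪ Z₂ ∈ F →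
    Z₁ ∈ F ∨ Z₂ ∈ F

def HasCIP (F : Set (Set X)) : Prop :=
  ∀ s : ℕ → Set X, (∀ n, s n ∈ F) → (⋂ n, s n).Nonempty

def IsFixedFamily (F : Set (Set X)) : Prop := (⋂₀ F).Nonempty

def IsRealcompact (Y : Type*) [TopologicalSpace Y] : Prop :=
  ∀ F : Set (Set Y), IsZUltrafilter F → HasCIP F → IsFixedFamily F

def CompletelySeparated [TopologicalSpace X] (A B : Set X) : Prop :=
  ∃ f : X → ℝ, Continuous f ∧ (∀ x ∈ A, f x = 0) ∧ (∀ x ∈ B, f x = 1)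

def IsHard [TopologicalSpace X] (H : Set X) : Prop :=
  IsClosed H ∧ ∃ K : Set X, IsCompact K ∧ ∀ V : Set X, IsOpen V → K ⊆ V →
    ∃ P : Set X, IsRealcompact ↥P ∧ CompletelySeparated (H \ V) Pᶜ

def IsPseudocompact (Y : Type*) [TopologicalSpace Y] : Prop :=
  ∀ f : Y → ℝ, Continuous f → ∃ M : ℝ, ∀ y, |f y| ≤ M

def NearlyPseudocompact (Y : Type*) [TopologicalSpace Y] : Prop :=
  ∃ X₁ X₂ : Set Y, X₁ ∪ X₂ = Set.univ ∧
    X₁ = closure (interior X₁) ∧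
    X₁ = closure {y : Y | ∃ K : Set Y, IsCompact K ∧ K ∈ nhds y} ∧
    IsPseudocompact ↥X₁ ∧
    X₂ = closure (interior X₂) ∧
    (∀ y ∈ X₂, ¬ ∃ N ∈ nhds y, IsRealcompact ↥N) ∧
    interior (X₁ ∩ X₂) = (∅ : Set Y)

def IsHZFilter [TopologicalSpace X] (F : Set (Set X)) : Prop :=
  IsZFilter F ∧ ∀ Z ∈ F, ∃ H ∈ F, IsHard H ∧ H ⊆ Z

def IsHZUltrafilter [TopologicalSpace X] (F : Set (Set X)) : Prop :=
  IsZUltrafilter F ∧ ∃ H ∈ F, IsHard H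

def deltaX (X : Type*) [TopologicalSpace X] : Type _ :=
  {F : Set (Set X) // IsZUltrafilter F ∧ (IsFixedFamily F ∨ ∃ H ∈ F, IsHard H)}

def deltaCl [TopologicalSpace X] (Z : Set X) : Set (deltaX X) :=
  {p | Z ∈ p.1}

instance [TopologicalSpace X] : TopologicalSpace (deltaX X) :=
  TopologicalSpace.generateFrom {U | ∃ Z : Set X, IsZeroSet Z ∧ U = (deltaCl Z)ᶜ}

def pointUltra [TopologicalSpace X] (x : X) : Set (Set X) :=
  {Z | IsZeroSet Z ∧ x ∈ Z}
section Aux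
variable [TopologicalSpace X]

lemma zs_univ : IsZeroSet (Set.univ : Set X) :=
  ⟨fun _ => 0, continuous_const, by simp⟩

lemma zs_inter {Z₁ Z₂ : Set X} (h₁ : IsZeroSet Z₁) (h₂ : IsZeroSet Z₂) :
    IsZeroSet (Z₁ ∩ Z₂) := by
  obtain ⟨f, hf, rfl⟩ := h₁
  obtain ⟨g, hg, rfl⟩ := h₂
  refine ⟨fun x => |f x| + |g x|, (hf.abs.add hg.abs), ?_⟩
  ext x
  simp only [mem_inter_iff, mem_setOf_eq]
  constructor
  · rintro ⟨h1, h2⟩; simp [h1, h2]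
  · intro h
    have hf0 : |f x| = 0 := by nlinarith [abs_nonneg (f x), abs_nonneg (g x)]
    have hg0 : |g x| = 0 := by nlinarith [abs_nonneg (f x), abs_nonneg (g x)]
    exact ⟨abs_eq_zero.mp hf0, abs_eq_zero.mp hg0⟩

lemma zs_le {f : X → ℝ} (hf : Continuous f) (c : ℝ) :
    IsZeroSet {x | f x ≤ c} := by
  refine ⟨fun x => max (f x - c) 0, (hf.sub continuous_const).max continuous_const, ?_⟩
  ext x
  simp [max_eq_right_iff, sub_nonpos]

lemma zs_ge {f : X → ℝ} (hf : Continuous f) (c : ℝ) :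
    IsZeroSet {x | c ≤ f x} := by
  have := zs_le (f := fun x => -f x) hf.neg (-c)
  convert this using 2
  ext x
  simp

lemma zs_closed {Z : Set X} (h : IsZeroSet Z) : IsClosed Z := by
  obtain ⟨f, hf, rfl⟩ := h
  exact isClosed_eq hf continuous_const

end Aux

section Sum
variable [TopologicalSpace X]

lemma sum_helper (g : ℕ → X → ℝ) (hg : ∀ n, Continuous (g n)) :
    ∃ h : X → ℝ, Continuous h ∧
      (∀ x n, g n x ≠ 0 → 0 < h x) ∧
      (∀ (N : ℕ) (x : X), (∀ n ≤ N, g n x = 0) → h x ≤ (2:ℝ)⁻¹ ^ (N + 1)) := by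
  set t : ℕ → X → ℝ := fun n x => (2:ℝ)⁻¹ ^ (n+1) * min |g n x| 1 with ht
  have htc : ∀ n, Continuous (t n) :=
    fun n => continuous_const.mul ((hg n).abs.min continuous_const)
  have htnn : ∀ n x, 0 ≤ t n x := fun n x =>
    mul_nonneg (by positivity) (le_min (abs_nonneg _) zero_le_one)
  have htb : ∀ n x, t n x ≤ (2:ℝ)⁻¹ ^ (n+1) := fun n x =>
    mul_le_of_le_one_right (by positivity) (min_le_right _ _)
  have hu : Summable (fun n : ℕ => (2:ℝ)⁻¹ ^ (n+1)) := by
    have : Summable (fun n : ℕ => (2:ℝ)⁻¹ ^ n) :=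
      summable_geometric_of_lt_one (by norm_num) (by norm_num)
    simpa [pow_succ] using this.mul_right (2:ℝ)⁻¹
  have hsum : ∀ x, Summable (fun n => t n x) := fun x =>
    Summable.of_nonneg_of_le (fun n => htnn n x) (fun n => htb n x) hu
  refine ⟨fun x => ∑' n, t n x, ?_, ?_, ?_⟩
  · exact continuous_tsum htc hu (fun n x => by
      rw [Real.norm_eq_abs, abs_of_nonneg (htnn n x)]; exact htb n x)
  · intro x n hgn
    have h1 : 0 < t n x :=
      mul_pos (by positivity) (lt_min (abs_pos.mpr hgn) one_pos)
    have h2 : t n x ≤ ∑' m, t m x := Summable.le_tsum (hsum x) n (fun j _ => htnn j x)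
    linarith
  · intro N x hx
    have hz : ∀ n ≤ N, t n x = 0 := by
      intro n hn
      simp [ht, hx n hn]
    have hdecomp := Summable.sum_add_tsum_nat_add (f := fun n => t n x) (N+1) (hsum x)
    have hzero : ∑ i ∈ Finset.range (N+1), t i x = 0 :=
      Finset.sum_eq_zero (fun i hi => hz i (Nat.lt_succ_iff.mp (Finset.mem_range.mp hi)))
    have heq : (∑' n, t n x) = ∑' i, t (i + (N+1)) x := by
      rw [← hdecomp, hzero, zero_add]
    show (∑' n, t n x) ≤ (2:ℝ)⁻¹ ^ (N + 1)
    rw [heq]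
    have hstep : ∀ i : ℕ, t (i + (N+1)) x ≤ (2:ℝ)⁻¹ ^ (i + (N+2)) := by
      intro i
      have h0 := htb (i + (N+1)) x
      rwa [show i + (N+1) + 1 = i + (N+2) from by omega] at h0
    have hsum1 : Summable (fun i => t (i + (N+1)) x) :=
      (summable_nat_add_iff (f := fun n => t n x) (N+1)).mpr (hsum x)
    have hsum2 : Summable (fun i : ℕ => (2:ℝ)⁻¹ ^ (i + (N+2))) := by
      simpa using (summable_nat_add_iff (f := fun n : ℕ => (2:ℝ)⁻¹ ^ n) (N+2)).mpr
        (summable_geometric_of_lt_one (by norm_num) (by norm_num))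
    calc ∑' i, t (i + (N+1)) x ≤ ∑' i : ℕ, (2:ℝ)⁻¹ ^ (i + (N+2)) :=
          Summable.tsum_le_tsum hstep hsum1 hsum2
      _ = ∑' i : ℕ, (2:ℝ)⁻¹ ^ i * (2:ℝ)⁻¹ ^ (N+2) :=
          tsum_congr fun i => pow_add _ i (N+2)
      _ = (∑' i : ℕ, (2:ℝ)⁻¹ ^ i) * (2:ℝ)⁻¹ ^ (N+2) := tsum_mul_right
      _ = (2:ℝ)⁻¹ ^ (N+1) := by
          rw [tsum_geometric_of_lt_one (by norm_num) (by norm_num), pow_succ (2:ℝ)⁻¹ (N+1)]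
          norm_num
          ring

end Sum

section Filters
variable [TopologicalSpace X]

lemma zf_nonempty_mem {F : Set (Set X)} (hF : IsZFilter F) {Z : Set X} (hZ : Z ∈ F) :
    Z.Nonempty := by
  rcases Set.eq_empty_or_nonempty Z with h | h
  · exact absurd (h ▸ hZ) hF.2.1
  · exact h

lemma exists_zultra {F : Set (Set X)} (hF : IsZFilter F) :
    ∃ U, IsZUltrafilter U ∧ F ⊆ U := by
  have hzorn : ∀ c ⊆ {G | IsZFilter G ∧ F ⊆ G}, IsChain (· ⊆ ·) c → c.Nonempty →
      ∃ ub ∈ {G | IsZFilter G ∧ F ⊆ G}, ∀ s ∈ c, s ⊆ ub := by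
    intro c hc hchain hcne
    refine ⟨⋃₀ c, ⟨⟨?_, ?_, ?_, ?_, ?_⟩, ?_⟩, fun s hs => subset_sUnion_of_mem hs⟩
    · rintro Z ⟨G, hG, hZG⟩
      exact (hc hG).1.1 Z hZG
    · rintro ⟨G, hG, hZG⟩
      exact (hc hG).1.2.1 hZG
    · obtain ⟨G, hG⟩ := hcne
      exact ⟨G, hG, (hc hG).1.2.2.1⟩
    · rintro Z₁ ⟨G₁, hG₁, hZ₁⟩ Z₂ ⟨G₂, hG₂, hZ₂⟩
      rcases hchain.total hG₁ hG₂ with h | h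
      · exact ⟨G₂, hG₂, (hc hG₂).1.2.2.2.1 Z₁ (h hZ₁) Z₂ hZ₂⟩
      · exact ⟨G₁, hG₁, (hc hG₁).1.2.2.2.1 Z₁ hZ₁ Z₂ (h hZ₂)⟩
    · rintro Z₁ ⟨G, hG, hZG⟩ Z₂ hZ₂ hsub
      exact ⟨G, hG, (hc hG).1.2.2.2.2 Z₁ hZG Z₂ hZ₂ hsub⟩
    · obtain ⟨G, hG⟩ := hcne
      exact (hc hG).2.trans (subset_sUnion_of_mem hG)
  obtain ⟨U, hFU, hUmax⟩ := zorn_subset_nonempty {G | IsZFilter G ∧ F ⊆ G} hzorn F ⟨hF, subset_rfl⟩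
  refine ⟨U, ⟨hUmax.1.1, ?_⟩, hUmax.1.2⟩
  intro G hG hUG
  exact (hUmax.2 ⟨hG, hFU.trans hUG⟩ hUG).antisymm hUG

lemma zultra_mem_of_meets {U : Set (Set X)} (hU : IsZUltrafilter U) {Z : Set X}
    (hZ : IsZeroSet Z) (h : ∀ W ∈ U, (Z ∩ W).Nonempty) : Z ∈ U := by
  set G : Set (Set X) := {Z' | IsZeroSet Z' ∧ ∃ W ∈ U, Z ∩ W ⊆ Z'} with hGdef
  have hG : IsZFilter G := by
    refine ⟨fun Z' hZ' => hZ'.1, ?_, ⟨zs_univ, Set.univ, hU.1.2.2.1, subset_univ _⟩, ?_, ?_⟩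
    · rintro ⟨-, W, hW, hsub⟩
      exact (h W hW).ne_empty (subset_empty_iff.mp hsub)
    · rintro Z₁ ⟨hz₁, W₁, hW₁, hs₁⟩ Z₂ ⟨hz₂, W₂, hW₂, hs₂⟩
      refine ⟨zs_inter hz₁ hz₂, W₁ ∩ W₂, hU.1.2.2.2.1 W₁ hW₁ W₂ hW₂, ?_⟩
      intro x hx
      exact ⟨hs₁ ⟨hx.1, hx.2.1⟩, hs₂ ⟨hx.1, hx.2.2⟩⟩
    · rintro Z₁ ⟨hz₁, W, hW, hs⟩ Z₂ hz₂ hsub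
      exact ⟨hz₂, W, hW, hs.trans hsub⟩
  have hsub : U ⊆ G := fun W hW =>
    ⟨hU.1.1 W hW, W, hW, inter_subset_right⟩
  have : G = U := hU.2 G hG hsub
  rw [← this]
  exact ⟨hZ, Set.univ, hU.1.2.2.1, inter_subset_left⟩

lemma zultra_prime {U : Set (Set X)} (hU : IsZUltrafilter U) : IsPrimeZFilter U := by
  refine ⟨hU.1, ?_⟩
  intro Z₁ Z₂ hz₁ hz₂ hmem
  by_contra hcon
  push_neg at hcon
  have key : ∀ Z, IsZeroSet Z → Z ∉ U → ∃ W ∈ U, Z ∩ W = ∅ := by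
    intro Z hZ hZU
    by_contra hc
    push_neg at hc
    exact hZU (zultra_mem_of_meets hU hZ hc)
  obtain ⟨W₁, hW₁, he₁⟩ := key Z₁ hz₁ hcon.1
  obtain ⟨W₂, hW₂, he₂⟩ := key Z₂ hz₂ hcon.2
  have hmem2 : (Z₁ ∪ Z₂) ∩ (W₁ ∩ W₂) ∈ U :=
    hU.1.2.2.2.1 _ hmem _ (hU.1.2.2.2.1 W₁ hW₁ W₂ hW₂)
  have : (Z₁ ∪ Z₂) ∩ (W₁ ∩ W₂) = ∅ := by
    rw [Set.eq_empty_iff_forall_notMem]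
    rintro x ⟨h1 | h1, h2, h3⟩
    · exact (Set.eq_empty_iff_forall_notMem.mp he₁) x ⟨h1, h2⟩
    · exact (Set.eq_empty_iff_forall_notMem.mp he₂) x ⟨h1, h3⟩
  exact hU.1.2.1 (this ▸ hmem2)

end Filters

section Main
variable [TopologicalSpace X]

lemma zf_finset_sInter {F : Set (Set X)} (hF : IsZFilter F) :
    ∀ T : Finset (Set X), ↑T ⊆ F → ⋂₀ (T : Set (Set X)) ∈ F := by
  classical
  intro T
  induction T using Finset.induction_on with
  | empty => intro _; simpa using hF.2.2.1
  | @insert a s ha ih =>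
    intro hT
    rw [Finset.coe_insert, Set.sInter_insert]
    have h1 : a ∈ F := hT (by simp)
    have h2 : ⋂₀ (s : Set (Set X)) ∈ F := ih (fun x hx => hT (by simp [hx]))
    exact hF.2.2.2.1 a h1 _ h2

lemma AtoB
    (hA : ∀ S : Set (Set X), (∀ A ∈ S, IsClosed A) →
        (∀ f : X → ℝ, Continuous f → ∃ A ∈ S, ∃ M : ℝ, ∀ x ∈ A, |f x| ≤ M) →
        (∀ T : Finset (Set X), ↑T ⊆ S → (⋂₀ (T : Set (Set X))).Nonempty) →
        IsFixedFamily S) :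
    ∀ F : Set (Set X), IsPrimeZFilter F → HasCIP F → IsFixedFamily F := by
  intro F hF hCIP
  apply hA F
  · exact fun A hA' => zs_closed (hF.1.1 A hA')
  · intro f hf
    by_contra hc
    push_neg at hc
    have hAn : ∀ n : ℕ, {x | (n:ℝ) ≤ |f x|} ∈ F := by
      intro n
      have hun : {x | |f x| ≤ (n:ℝ)} ∪ {x | (n:ℝ) ≤ |f x|} = univ := by
        ext x; simp [le_total]
      have hsplit := hF.2 _ _ (zs_le hf.abs (n:ℝ)) (zs_ge hf.abs (n:ℝ))
        (by rw [hun]; exact hF.1.2.2.1)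
      rcases hsplit with h | h
      · exfalso
        obtain ⟨x, hx1, hx2⟩ := hc _ h (n:ℝ)
        exact absurd hx1 (not_le.mpr hx2)
      · exact h
    obtain ⟨x, hx⟩ := hCIP (fun n => {x | (n:ℝ) ≤ |f x|}) hAn
    obtain ⟨n, hn⟩ := exists_nat_gt |f x|
    exact absurd (mem_iInter.mp hx n) (not_le.mpr hn)
  · intro T hT
    exact zf_nonempty_mem hF.1 (zf_finset_sInter hF.1 T hT)

lemma BtoC
    (hB : ∀ F : Set (Set X), IsPrimeZFilter F → HasCIP F → IsFixedFamily F) :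
    ∀ F : Set (Set X), IsZUltrafilter F → HasCIP F → IsFixedFamily F :=
  fun F hF hCIP => hB F (zultra_prime hF) hCIP

lemma CtoA [T35Space X]
    (hC : ∀ F : Set (Set X), IsZUltrafilter F → HasCIP F → IsFixedFamily F)
    (S : Set (Set X)) (hScl : ∀ A ∈ S, IsClosed A)
    (hStab : ∀ f : X → ℝ, Continuous f → ∃ A ∈ S, ∃ M : ℝ, ∀ x ∈ A, |f x| ≤ M)
    (hFIP : ∀ T : Finset (Set X), ↑T ⊆ S → (⋂₀ (T : Set (Set X))).Nonempty) :
    IsFixedFamily S := by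
  classical
  set E : Set (Set X) :=
    {Z | IsZeroSet Z ∧ ∃ T : Finset (Set X), ↑T ⊆ S ∧ ⋂₀ (T : Set (Set X)) ⊆ Z} with hEdef
  have hE : IsZFilter E := by
    refine ⟨fun Z hZ => hZ.1, ?_, ⟨zs_univ, ∅, by simp, subset_univ _⟩, ?_, ?_⟩
    · rintro ⟨-, T, hTS, hsub⟩
      exact (hFIP T hTS).ne_empty (subset_empty_iff.mp hsub)
    · rintro Z₁ ⟨hz₁, T₁, hT₁, hs₁⟩ Z₂ ⟨hz₂, T₂, hT₂, hs₂⟩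
      refine ⟨zs_inter hz₁ hz₂, T₁ ∪ T₂, ?_, ?_⟩
      · rw [Finset.coe_union]; exact union_subset hT₁ hT₂
      · rw [Finset.coe_union, Set.sInter_union]
        exact fun x hx => ⟨hs₁ hx.1, hs₂ hx.2⟩
    · rintro Z₁ ⟨hz₁, T, hTS, hs⟩ Z₂ hz₂ hsub
      exact ⟨hz₂, T, hTS, hs.trans hsub⟩
  obtain ⟨U, hU, hEU⟩ := exists_zultra hE
  have hCIPU : HasCIP U := by
    intro s hs
    by_contra hne
    rw [Set.not_nonempty_iff_eq_empty] at hne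
    choose g hgc hgz using fun n => hU.1.1 (s n) (hs n)
    obtain ⟨h, hhc, hpos, htail⟩ := sum_helper g hgc
    have hhpos : ∀ x, 0 < h x := by
      intro x
      have hx : x ∉ ⋂ n, s n := by rw [hne]; exact notMem_empty x
      rw [mem_iInter] at hx; push_neg at hx
      obtain ⟨n, hn⟩ := hx
      refine hpos x n (fun h0 => hn ?_)
      rw [hgz n]; exact h0
    have hinv : Continuous fun x => (h x)⁻¹ := hhc.inv₀ (fun x => ne_of_gt (hhpos x))
    obtain ⟨A, hAS, M, hM⟩ := hStab _ hinv
    have hAne : A.Nonempty := by simpa using hFIP {A} (by simp [hAS])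
    obtain ⟨a, ha⟩ := hAne
    have hMpos : 0 < M :=
      lt_of_lt_of_le (abs_pos.mpr (inv_ne_zero (ne_of_gt (hhpos a)))) (hM a ha)
    have hlb : ∀ x ∈ A, M⁻¹ ≤ h x := by
      intro x hx
      have h1 : (h x)⁻¹ ≤ M := le_trans (le_abs_self _) (hM x hx)
      have h2 := hhpos x
      have e1 : h x * (h x)⁻¹ = 1 := mul_inv_cancel₀ (ne_of_gt h2)
      have e2 : M * M⁻¹ = 1 := mul_inv_cancel₀ (ne_of_gt hMpos)
      nlinarith [inv_pos.mpr hMpos, inv_pos.mpr h2]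
    have hCmem : {x | M⁻¹ ≤ h x} ∈ U := by
      refine hEU ⟨zs_ge hhc M⁻¹, {A}, by simp [hAS], ?_⟩
      simp only [Finset.coe_singleton, Set.sInter_singleton]
      exact fun x hx => hlb x hx
    obtain ⟨N, hN⟩ := exists_pow_lt_of_lt_one (inv_pos.mpr hMpos) (by norm_num : (2:ℝ)⁻¹ < 1)
    have hIn : ∀ N : ℕ, (⋂ n ∈ Finset.range (N+1), s n) ∈ U := by
      intro N
      induction N with
      | zero => simpa using hs 0
      | succ k ih =>
        have heq : (⋂ n ∈ Finset.range (k+2), s n)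
            = (⋂ n ∈ Finset.range (k+1), s n) ∩ s (k+1) := by
          rw [Finset.range_add_one]
          simp [Set.biInter_insert, Set.inter_comm]
        rw [heq]
        exact hU.1.2.2.2.1 _ ih _ (hs (k+1))
    have hBmem : {x | h x ≤ (2:ℝ)⁻¹ ^ (N+1)} ∈ U := by
      refine hU.1.2.2.2.2 _ (hIn N) _ (zs_le hhc _) ?_
      intro x hx
      refine htail N x (fun n hn => ?_)
      have hxn : x ∈ s n := by
        simp only [Set.mem_iInter, Finset.mem_range] at hx
        exact hx n (Nat.lt_succ_of_le hn)
      have := hgz n ▸ hxn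
      exact this
    have hBC : {x | h x ≤ (2:ℝ)⁻¹ ^ (N+1)} ∩ {x | M⁻¹ ≤ h x} ∈ U :=
      hU.1.2.2.2.1 _ hBmem _ hCmem
    have hBCe : {x | h x ≤ (2:ℝ)⁻¹ ^ (N+1)} ∩ {x | M⁻¹ ≤ h x} = ∅ := by
      rw [Set.eq_empty_iff_forall_notMem]
      rintro x ⟨h1, h2⟩
      have h3 : (2:ℝ)⁻¹ ^ (N+1) ≤ (2:ℝ)⁻¹ ^ N :=
        pow_le_pow_of_le_one (by norm_num) (by norm_num) (Nat.le_succ N)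
      simp only [Set.mem_setOf_eq] at h1 h2
      linarith
    exact hU.1.2.1 (hBCe ▸ hBC)
  obtain ⟨x, hx⟩ := hC U hU hCIPU
  refine ⟨x, fun A hAS => ?_⟩
  by_contra hxA
  obtain ⟨f, hfc, hfx, hfA⟩ :=
    CompletelyRegularSpace.completely_regular x A (hScl A hAS) hxA
  have hZ' : IsZeroSet {y | (f y : ℝ) - 1 = 0} :=
    ⟨fun y => (f y : ℝ) - 1, (continuous_subtype_val.comp hfc).sub continuous_const, rfl⟩
  have hAZ : A ⊆ {y | (f y : ℝ) - 1 = 0} := by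
    intro y hy
    have : f y = 1 := hfA hy
    simp [this]
  have hmem : {y | (f y : ℝ) - 1 = 0} ∈ U :=
    hEU ⟨hZ', {A}, by simp [hAS], by simpa using hAZ⟩
  have : (f x : ℝ) - 1 = 0 := hx _ hmem
  rw [hfx] at this
  norm_num at this

end Main

/-- realcompactness (stable families of closed sets with FIP are fixed)
iff prime z-filters with CIP are fixed, iff z-ultrafilters with CIP are fixed. -/
theorem stmt0 [TopologicalSpace X] [T35Space X] :
    ((∀ S : Set (Set X), (∀ A ∈ S, IsClosed A) →
        (∀ f : X → ℝ, Continuous f → ∃ A ∈ S, ∃ M : ℝ, ∀ x ∈ A, |f x| ≤ M) →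
        (∀ T : Finset (Set X), ↑T ⊆ S → (⋂₀ (T : Set (Set X))).Nonempty) →
        IsFixedFamily S) ↔
      (∀ F : Set (Set X), IsPrimeZFilter F → HasCIP F → IsFixedFamily F)) ∧
    ((∀ F : Set (Set X), IsPrimeZFilter F → HasCIP F → IsFixedFamily F) ↔
      (∀ F : Set (Set X), IsZUltrafilter F → HasCIP F → IsFixedFamily F)) := by
  refine ⟨⟨AtoB, fun hB S h1 h2 h3 => CtoA (BtoC hB) S h1 h2 h3⟩,
    ⟨BtoC, fun hCc => AtoB (fun S h1 h2 h3 => CtoA hCc S h1 h2 h3)⟩⟩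
end

section
/- A closed set H in a Tychonoff space X is hard in X if and only if there exists a compact subset K of H itself such that for every open neighbourhood G of K in X, the set H \ G is completely separated from the complement of some realcompact subset of X. -/
open Set Topology

variable {X : Type*}

/-- H hard iff the compact set witnessing hardness can be chosen inside H. -/
theorem stmt3 [TopologicalSpace X] [T35Space X] (H : Set X) (hH : IsClosed H) :
    IsHard H ↔ ∃ K : Set X, K ⊆ H ∧ IsCompact K ∧ ∀ G : Set X, IsOpen G → K ⊆ G →
      ∃ P : Set X, IsRealcompact ↥P ∧ CompletelySeparated (H \ G) Pᶜ := by
  constructor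
  · rintro ⟨-, K, hKc, hK⟩
    refine ⟨K ∩ H, inter_subset_right, hKc.inter_right hH, fun G hG hKG => ?_⟩
    obtain ⟨P, hP, f, hf, h0, h1⟩ := hK (G ∪ Hᶜ) (hG.union hH.isOpen_compl)
      (fun x hx => by
        by_cases hxH : x ∈ H
        · exact Or.inl (hKG ⟨hx, hxH⟩)
        · exact Or.inr hxH)
    refine ⟨P, hP, f, hf, fun x hx => h0 x ?_, h1⟩
    exact ⟨hx.1, fun h => h.elim hx.2 (fun h' => h' hx.1)⟩
  · rintro ⟨K, hKH, hKc, hK⟩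
    exact ⟨hH, K, hKc, fun V hV hKV => hK V hV hKV⟩
end

section
/- Every closed subset of a hard set in a Tychonoff space X is hard in X, and any closed set completely separated from the complement of a realcompact subset of X is hard in X. -/
open Set Topology

variable {X : Type*}

/-- closed subsets of hard sets are hard; closed sets completely separated
from the complement of a realcompact subset are hard. -/
theorem stmt5 [TopologicalSpace X] [T35Space X] :
    (∀ H L : Set X, IsHard H → IsClosed L → L ⊆ H → IsHard L) ∧
    (∀ H P : Set X, IsClosed H → IsRealcompact ↥P → CompletelySeparated H Pᶜ →
      IsHard H) := by
  constructor
  · rintro H L ⟨Hc, K, Kcpt, hK⟩ Lc hLH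
    refine ⟨Lc, K, Kcpt, fun V hV hKV => ?_⟩
    obtain ⟨P, hP, f, hf, h0, h1⟩ := hK V hV hKV
    exact ⟨P, hP, f, hf, fun x hx => h0 x ⟨hLH hx.1, hx.2⟩, h1⟩
  · rintro H P Hc hP ⟨f, hf, h0, h1⟩
    exact ⟨Hc, ∅, isCompact_empty, fun V _ _ =>
      ⟨P, hP, f, hf, fun x hx => h0 x hx.1, h1⟩⟩
end

section
/- The union of a hard set and a compact set in a Tychonoff space X is hard in X. -/
open Set Topology

variable {X : Type*}

/-- the union of a hard set and a compact set is hard. -/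
theorem stmt6 [TopologicalSpace X] [T35Space X] (H K : Set X)
    (hH : IsHard H) (hK : IsCompact K) : IsHard (H ∪ K) := by
  obtain ⟨hHc, K₀, hK₀, hP⟩ := hH
  refine ⟨hHc.union hK.isClosed, K₀ ∪ K, hK₀.union hK, ?_⟩
  intro V hV hKV
  obtain ⟨P, hPr, hsep⟩ := hP V hV (subset_union_left.trans hKV)
  have h : (H ∪ K) \ V = H \ V := by
    rw [union_diff_distrib, diff_eq_empty.2 (subset_union_right.trans hKV), union_empty]
  exact ⟨P, hPr, h ▸ hsep⟩
end

section
/- A Tychonoff space X is nearly pseudocompact if and only if every continuous real-valued function on X whose support is a hard set is bounded, i.e. C_H(X) ⊆ C*(X). -/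
open Set Topology

variable {X : Type*}

section Aux1

variable {Y : Type*} [TopologicalSpace Y]

lemma isZeroSet_univ : IsZeroSet (univ : Set Y) :=
  ⟨fun _ => 0, continuous_const, by ext x; simp⟩

lemma IsZeroSet.inter {Z₁ Z₂ : Set Y} (h₁ : IsZeroSet Z₁) (h₂ : IsZeroSet Z₂) :
    IsZeroSet (Z₁ ∩ Z₂) := by
  obtain ⟨f, hf, rfl⟩ := h₁
  obtain ⟨g, hg, rfl⟩ := h₂
  refine ⟨fun x => |f x| + |g x|, by fun_prop, ?_⟩
  ext x
  simp only [mem_inter_iff, mem_setOf_eq]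
  constructor
  · rintro ⟨h1, h2⟩; simp [h1, h2]
  · intro h
    have h1 : |f x| = 0 ∧ |g x| = 0 := by
      constructor <;> nlinarith [abs_nonneg (f x), abs_nonneg (g x)]
    exact ⟨abs_eq_zero.mp h1.1, abs_eq_zero.mp h1.2⟩

lemma IsZeroSet.isClosed {Z : Set Y} (h : IsZeroSet Z) : IsClosed Z := by
  obtain ⟨f, hf, rfl⟩ := h
  exact isClosed_eq hf continuous_const

lemma IsZeroSet.preimage {W : Type*} [TopologicalSpace W] {Z : Set Y} (h : IsZeroSet Z)
    {g : W → Y} (hg : Continuous g) : IsZeroSet (g ⁻¹' Z) := by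
  obtain ⟨f, hf, rfl⟩ := h
  exact ⟨f ∘ g, hf.comp hg, rfl⟩

lemma isZeroSet_le {f : Y → ℝ} (hf : Continuous f) (c : ℝ) : IsZeroSet {x | f x ≤ c} := by
  refine ⟨fun x => max (f x - c) 0, by fun_prop, ?_⟩
  ext x
  simp [max_eq_right_iff, sub_nonpos]

lemma isZeroSet_ge {f : Y → ℝ} (hf : Continuous f) (c : ℝ) : IsZeroSet {x | c ≤ f x} := by
  have := isZeroSet_le (hf.neg) (-c)
  convert this using 1
  ext x; simp [mem_setOf_eq]

lemma isZeroSet_zero {f : Y → ℝ} (hf : Continuous f) : IsZeroSet {x | f x = 0} :=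
  ⟨f, hf, rfl⟩

-- members of z-filters and finite intersections
lemma IsZFilter.finite_iInter {F : Set (Set Y)} (hF : IsZFilter F) {n : ℕ}
    {s : ℕ → Set Y} (hs : ∀ k, s k ∈ F) : (⋂ k ∈ Finset.range n, s k) ∈ F := by
  induction n with
  | zero => simpa using hF.2.2.1
  | succ m ih =>
      rw [Finset.range_add_one, Finset.set_biInter_insert]
      exact hF.2.2.2.1 _ (hs m) _ ih

lemma IsZFilter.nonempty_of_mem {F : Set (Set Y)} (hF : IsZFilter F) {Z : Set Y} (hZ : Z ∈ F) :
    Z.Nonempty := by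
  rcases Set.eq_empty_or_nonempty Z with h | h
  · exact absurd (h ▸ hZ) hF.2.1
  · exact h

/-- Zorn extension of a z-filter to a z-ultrafilter. -/
lemma IsZFilter.exists_zultrafilter {F₀ : Set (Set Y)} (h₀ : IsZFilter F₀) :
    ∃ F, IsZUltrafilter F ∧ F₀ ⊆ F := by
  set S : Set (Set (Set Y)) := {G | IsZFilter G ∧ F₀ ⊆ G} with hS
  have hzorn : ∀ c ⊆ S, IsChain (· ⊆ ·) c → c.Nonempty → ∃ ub ∈ S, ∀ s ∈ c, s ⊆ ub := by
    intro c hcS hchain ⟨G₀, hG₀⟩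
    refine ⟨⋃₀ c, ⟨⟨?_, ?_, ?_, ?_, ?_⟩, ?_⟩, fun s hs => subset_sUnion_of_mem hs⟩
    · rintro Z ⟨G, hG, hZG⟩
      exact ((hcS hG).1).1 Z hZG
    · rintro ⟨G, hG, hZG⟩
      exact (hcS hG).1.2.1 hZG
    · exact ⟨G₀, hG₀, (hcS hG₀).1.2.2.1⟩
    · rintro Z₁ ⟨G₁, hG₁, hZ₁⟩ Z₂ ⟨G₂, hG₂, hZ₂⟩
      rcases hchain.total hG₁ hG₂ with h | h
      · exact ⟨G₂, hG₂, (hcS hG₂).1.2.2.2.1 _ (h hZ₁) _ hZ₂⟩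
      · exact ⟨G₁, hG₁, (hcS hG₁).1.2.2.2.1 _ hZ₁ _ (h hZ₂)⟩
    · rintro Z₁ ⟨G₁, hG₁, hZ₁⟩ Z₂ hZ₂ hsub
      exact ⟨G₁, hG₁, (hcS hG₁).1.2.2.2.2 _ hZ₁ _ hZ₂ hsub⟩
    · exact (subset_sUnion_of_mem hG₀).trans' (hcS hG₀).2 |>.trans (le_refl _)
  obtain ⟨m, hm₀, hmax⟩ := zorn_subset_nonempty S hzorn F₀ ⟨h₀, subset_rfl⟩
  refine ⟨m, ⟨hmax.prop.1, ?_⟩, hmax.prop.2⟩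
  intro G hG hmG
  exact (hmax.le_of_ge ⟨hG, hm₀.trans hmG⟩ hmG).antisymm hmG |>.symm ▸ rfl

/-- meets lemma -/
lemma IsZUltrafilter.mem_of_meets {F : Set (Set Y)} (hF : IsZUltrafilter F) {Z : Set Y}
    (hZ : IsZeroSet Z) (h : ∀ W ∈ F, (W ∩ Z).Nonempty) : Z ∈ F := by
  set G : Set (Set Y) := {Z' | IsZeroSet Z' ∧ ∃ W ∈ F, W ∩ Z ⊆ Z'} with hG
  have hGf : IsZFilter G := by
    refine ⟨fun Z' hZ' => hZ'.1, ?_, ⟨isZeroSet_univ, univ, hF.1.2.2.1, subset_univ _⟩, ?_, ?_⟩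
    · rintro ⟨_, W, hW, hsub⟩
      exact (h W hW).ne_empty (subset_empty_iff.mp hsub)
    · rintro Z₁ ⟨hz₁, W₁, hW₁, h₁⟩ Z₂ ⟨hz₂, W₂, hW₂, h₂⟩
      exact ⟨hz₁.inter hz₂, W₁ ∩ W₂, hF.1.2.2.2.1 _ hW₁ _ hW₂,
        fun x hx => ⟨h₁ ⟨hx.1.1, hx.2⟩, h₂ ⟨hx.1.2, hx.2⟩⟩⟩
    · rintro Z₁ ⟨hz₁, W₁, hW₁, h₁⟩ Z₂ hz₂ hsub
      exact ⟨hz₂, W₁, hW₁, h₁.trans hsub⟩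
  have hFG : F ⊆ G := fun W hW => ⟨hF.1.1 W hW, W, hW, inter_subset_left⟩
  have := hF.2 G hGf hFG
  rw [← this]
  exact ⟨hZ, univ, hF.1.2.2.1, by simp⟩

lemma IsZUltrafilter.exists_disjoint_of_not_mem {F : Set (Set Y)} (hF : IsZUltrafilter F)
    {Z : Set Y} (hZ : IsZeroSet Z) (h : Z ∉ F) : ∃ W ∈ F, W ∩ Z = ∅ := by
  by_contra hc
  push_neg at hc
  exact h (hF.mem_of_meets hZ fun W hW => hc W hW)

/-- prime lemma -/
lemma IsZUltrafilter.prime {F : Set (Set Y)} (hF : IsZUltrafilter F) {Z₁ Z₂ : Set Y}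
    (h₁ : IsZeroSet Z₁) (h₂ : IsZeroSet Z₂) (hu : Z₁ ∪ Z₂ ∈ F) : Z₁ ∈ F ∨ Z₂ ∈ F := by
  by_cases hmem : Z₁ ∈ F
  · exact Or.inl hmem
  obtain ⟨W, hW, hWdisj⟩ := hF.exists_disjoint_of_not_mem h₁ hmem
  right
  have hmem2 : W ∩ (Z₁ ∪ Z₂) ∈ F := hF.1.2.2.2.1 _ hW _ hu
  refine hF.1.2.2.2.2 _ hmem2 _ h₂ ?_
  rintro x ⟨hxW, hx⟩
  rcases hx with hx | hx
  · exact absurd (mem_inter hxW hx) (by rw [hWdisj]; exact fun h => h)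
  · exact hx

end Aux1
section Aux2

variable {Y : Type*} [TopologicalSpace Y]

/-- separation: point vs closed set, function 0 at point and 1 on the set. -/
lemma sep_point_closed [T35Space Y] {A : Set Y} (hA : IsClosed A) {x : Y} (hx : x ∉ A) :
    ∃ f : Y → ℝ, Continuous f ∧ f x = 0 ∧ (∀ a ∈ A, f a = 1) ∧ ∀ z, f z ∈ Icc (0:ℝ) 1 := by
  obtain ⟨f, hf, hfx, hfA⟩ := CompletelyRegularSpace.completely_regular x A hA hx
  refine ⟨fun z => (f z : ℝ), continuous_subtype_val.comp hf, by simp [hfx],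
    fun a ha => by simp [hfA ha], fun z => (f z).2⟩

/-- bump: 1 at point, 0 on closed set. -/
lemma bump_point_closed [T35Space Y] {A : Set Y} (hA : IsClosed A) {x : Y} (hx : x ∉ A) :
    ∃ f : Y → ℝ, Continuous f ∧ f x = 1 ∧ (∀ a ∈ A, f a = 0) ∧ ∀ z, f z ∈ Icc (0:ℝ) 1 := by
  obtain ⟨f, hf, hfx, hfA, hfI⟩ := sep_point_closed hA hx
  refine ⟨fun z => 1 - f z, continuous_const.sub hf, by simp [hfx],
    fun a ha => by simp [hfA a ha], fun z => ⟨by show (0:ℝ) ≤ 1 - f z; linarith [(hfI z).2],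
      by show (1:ℝ) - f z ≤ 1; linarith [(hfI z).1]⟩⟩

lemma IsZFilter.finset_iInter {F : Set (Set Y)} (hF : IsZFilter F) (u : Finset (Set Y))
    (hu : ∀ Z ∈ u, Z ∈ F) : (⋂ Z ∈ u, Z) ∈ F := by
  classical
  induction u using Finset.induction with
  | empty => simpa using hF.2.2.1
  | insert _ _ hni ih =>
      rw [Finset.set_biInter_insert]
      exact hF.2.2.2.1 _ (hu _ (Finset.mem_insert_self _ _)) _
        (ih fun Z hZ => hu Z (Finset.mem_insert_of_mem hZ))

/-- σ-compact subsets are realcompact. -/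
lemma realcompact_of_sigma_compact {T : Set Y} {C : ℕ → Set Y} (hC : ∀ n, IsCompact (C n))
    (hsub : ∀ n, C n ⊆ T) (hcov : T ⊆ ⋃ n, C n) : IsRealcompact ↥T := by
  classical
  intro F hF hCIP
  by_contra hfix
  have key : ∀ n, ∃ Z, Z ∈ F ∧ Z ∩ (((↑) : ↥T → Y) ⁻¹' (C n)) = ∅ := by
    intro n
    by_contra hc
    push_neg at hc
    have hcpt : IsCompact (((↑) : ↥T → Y) ⁻¹' (C n)) := by
      rw [Subtype.isCompact_iff, Subtype.image_preimage_coe, inter_eq_right.mpr (hsub n)]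
      exact hC n
    have hempty : (((↑) : ↥T → Y) ⁻¹' (C n)) ∩ ⋂ (Z : {Z // Z ∈ F}), (Z : Set ↥T) = ∅ := by
      by_contra hne
      rw [← Ne, ← nonempty_iff_ne_empty] at hne
      obtain ⟨q, _, hq2⟩ := hne
      simp only [mem_iInter] at hq2
      exact hfix ⟨q, fun Z hZ => hq2 ⟨Z, hZ⟩⟩
    obtain ⟨u, hu⟩ := hcpt.elim_finite_subfamily_closed (fun Z : {Z // Z ∈ F} => (Z : Set ↥T))
      (fun Z => (hF.1.1 _ Z.2).isClosed) hempty
    set W := ⋂ Z ∈ u.image Subtype.val, Z with hW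
    have hWF : W ∈ F := hF.1.finset_iInter _ (by
      intro Z hZ
      obtain ⟨Z', _, rfl⟩ := Finset.mem_image.mp hZ
      exact Z'.2)
    have hWsub : W ⊆ ⋂ Z ∈ u, (Z : Set ↥T) := fun x hx =>
      mem_iInter₂.mpr fun Z hZ => mem_iInter₂.mp hx _ (Finset.mem_image_of_mem _ hZ)
    obtain ⟨x, hxW, hxC⟩ := hc W hWF
    have hmem : x ∈ (((↑) : ↥T → Y) ⁻¹' (C n)) ∩ ⋂ Z ∈ u, (Z : Set ↥T) := ⟨hxC, hWsub hxW⟩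
    rw [hu] at hmem
    exact hmem
  choose s hsF hsdisj using key
  obtain ⟨q, hq⟩ := hCIP s hsF
  simp only [mem_iInter] at hq
  obtain ⟨m, hm⟩ := mem_iUnion.mp (hcov q.2)
  have : q ∈ s m ∩ (((↑) : ↥T → Y) ⁻¹' (C m)) := ⟨hq m, hm⟩
  rw [hsdisj m] at this
  exact this

end Aux2
section Aux3

variable {Y : Type*} [TopologicalSpace Y] [T35Space Y]

/-- A subset of Y which is closed in Y and contained in a realcompact subset is realcompact. -/
lemma realcompact_of_closed_subset {C N : Set Y} (hC : IsClosed C) (hCN : C ⊆ N)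
    (hN : IsRealcompact ↥N) : IsRealcompact ↥C := by
  classical
  intro F hF hCIP
  set e : ↥C → ↥N := fun c => ⟨c.1, hCN c.2⟩ with he
  have hecont : Continuous e := continuous_subtype_val.subtype_mk _
  set G : Set (Set ↥N) := {Z | IsZeroSet Z ∧ e ⁻¹' Z ∈ F} with hG
  have hGzf : IsZFilter G := by
    refine ⟨fun Z hZ => hZ.1, ?_, ⟨isZeroSet_univ, by simpa using hF.1.2.2.1⟩, ?_, ?_⟩
    · rintro ⟨-, h⟩
      rw [preimage_empty] at h
      exact hF.1.2.1 h
    · rintro Z₁ ⟨hz₁, h₁⟩ Z₂ ⟨hz₂, h₂⟩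
      exact ⟨hz₁.inter hz₂, by rw [preimage_inter]; exact hF.1.2.2.2.1 _ h₁ _ h₂⟩
    · rintro Z₁ ⟨hz₁, h₁⟩ Z₂ hz₂ hsub
      exact ⟨hz₂, hF.1.2.2.2.2 _ h₁ _ (hz₂.preimage hecont) (preimage_mono hsub)⟩
  have hGprime : ∀ Z₁ Z₂ : Set ↥N, IsZeroSet Z₁ → IsZeroSet Z₂ → Z₁ ∪ Z₂ ∈ G →
      Z₁ ∈ G ∨ Z₂ ∈ G := by
    intro Z₁ Z₂ hz₁ hz₂ hu
    have : e ⁻¹' Z₁ ∪ e ⁻¹' Z₂ ∈ F := by rw [← preimage_union]; exact hu.2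
    rcases hF.prime (hz₁.preimage hecont) (hz₂.preimage hecont) this with h | h
    · exact Or.inl ⟨hz₁, h⟩
    · exact Or.inr ⟨hz₂, h⟩
  have hGCIP : HasCIP G := by
    intro s hs
    obtain ⟨q, hq⟩ := hCIP (fun n => e ⁻¹' s n) fun n => (hs n).2
    simp only [mem_iInter] at hq
    exact ⟨e q, mem_iInter.mpr fun n => hq n⟩
  obtain ⟨U, hU, hGU⟩ := hGzf.exists_zultrafilter
  -- every member of U is a countable intersection of members of G
  have keyU : ∀ Z ∈ U, ∃ A : ℕ → Set ↥N, (∀ k, A k ∈ G) ∧ Z = ⋂ k, A k := by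
    intro Z hZ
    obtain ⟨w, hw, rfl⟩ := hU.1.1 Z hZ
    refine ⟨fun k => {x | |w x| ≤ ((k:ℝ)+1)⁻¹}, fun k => ?_, ?_⟩
    · have hA : IsZeroSet {x : ↥N | |w x| ≤ ((k:ℝ)+1)⁻¹} := isZeroSet_le (by fun_prop) _
      have hB : IsZeroSet {x : ↥N | ((k:ℝ)+1)⁻¹ ≤ |w x|} := isZeroSet_ge (by fun_prop) _
      have hcover : {x : ↥N | |w x| ≤ ((k:ℝ)+1)⁻¹} ∪ {x : ↥N | ((k:ℝ)+1)⁻¹ ≤ |w x|} ∈ G := by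
        have : {x : ↥N | |w x| ≤ ((k:ℝ)+1)⁻¹} ∪ {x : ↥N | ((k:ℝ)+1)⁻¹ ≤ |w x|} = univ := by
          ext x; simp [le_total]
        rw [this]
        exact hGzf.2.2.1
      rcases hGprime _ _ hA hB hcover with h | h
      · exact h
      · exfalso
        have hBU : {x : ↥N | ((k:ℝ)+1)⁻¹ ≤ |w x|} ∈ U := hGU h
        have hZBU : {x | w x = 0} ∩ {x : ↥N | ((k:ℝ)+1)⁻¹ ≤ |w x|} ∈ U :=
          hU.1.2.2.2.1 _ hZ _ hBU
        obtain ⟨x, hx1, hx2⟩ := hU.1.nonempty_of_mem hZBU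
        rw [mem_setOf_eq] at hx1 hx2
        rw [hx1] at hx2
        simp at hx2
        have : (0:ℝ) < ((k:ℝ)+1)⁻¹ := by positivity
        linarith
    · ext x
      simp only [mem_setOf_eq, mem_iInter]
      constructor
      · intro h k; rw [h]; simp; positivity
      · intro h
        by_contra hne
        have habs : 0 < |w x| := abs_pos.mpr hne
        obtain ⟨k, hk⟩ := exists_nat_one_div_lt habs
        have := h k
        rw [one_div] at hk
        linarith
  have hUCIP : HasCIP U := by
    intro s hs
    choose A hAG hAeq using fun n => keyU (s n) (hs n)
    obtain ⟨d⟩ : Nonempty (ℕ ≃ ℕ × ℕ) := ⟨(Denumerable.eqv (ℕ × ℕ)).symm⟩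
    obtain ⟨q, hq⟩ := hGCIP (fun m => A (d m).1 (d m).2) fun m => hAG _ _
    simp only [mem_iInter] at hq
    refine ⟨q, mem_iInter.mpr fun n => ?_⟩
    rw [hAeq n]
    refine mem_iInter.mpr fun k => ?_
    have := hq (d.symm (n, k))
    rwa [Equiv.apply_symm_apply] at this
  obtain ⟨p, hp⟩ := hN U hU hUCIP
  have hpG : ∀ Z ∈ G, p ∈ Z := fun Z hZ => hp _ (hGU hZ)
  -- p ∈ C
  have hpC : (p : Y) ∈ C := by
    by_contra hpc
    obtain ⟨f, hf, hfp, hfC, -⟩ := sep_point_closed hC hpc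
    have hZG : {x : ↥N | f x - 1 = 0} ∈ G := by
      refine ⟨⟨fun x => f x - 1, by fun_prop, rfl⟩, ?_⟩
      have : e ⁻¹' {x : ↥N | f x - 1 = 0} = univ := by
        ext c
        simp only [mem_preimage, mem_setOf_eq, mem_univ, iff_true]
        rw [hfC _ c.2]; ring
      rw [this]
      exact hF.1.2.2.1
    have := hpG _ hZG
    rw [mem_setOf_eq, hfp] at this
    norm_num at this
  refine ⟨⟨(p : Y), hpC⟩, fun W hW => ?_⟩
  by_contra hqW
  have hWclosed : IsClosed ((((↑) : ↥C → Y)) '' W) :=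
    (hC.isClosedEmbedding_subtypeVal.isClosedMap) _ ((hF.1.1 W hW).isClosed)
  have hpW : (p : Y) ∉ (((↑) : ↥C → Y)) '' W := by
    rintro ⟨c, hcW, hc⟩
    apply hqW
    have : c = ⟨(p : Y), hpC⟩ := Subtype.ext hc
    rwa [this] at hcW
  obtain ⟨f, hf, hfp, hfW, -⟩ := sep_point_closed hWclosed hpW
  have hZG : {x : ↥N | f x - 1 = 0} ∈ G := by
    refine ⟨⟨fun x => f x - 1, by fun_prop, rfl⟩, ?_⟩
    refine hF.1.2.2.2.2 _ hW _ (by exact ⟨fun c => f c - 1, by fun_prop, rfl⟩) ?_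
    intro c hcW
    have : f (c : Y) = 1 := hfW _ ⟨c, hcW, rfl⟩
    simp only [mem_preimage, mem_setOf_eq]
    rw [this]; ring
  have := hpG _ hZG
  rw [mem_setOf_eq, hfp] at this
  norm_num at this

end Aux3
section Aux4

variable {Y : Type*} [TopologicalSpace Y]

/-- Sufficient criterion for hardness. -/
lemma isHard_of_sep {S P : Set Y} (hS : IsClosed S) (hP : IsRealcompact ↥P) {g : Y → ℝ}
    (hg : Continuous g) (h0 : ∀ x ∈ S, g x = 0) (h1 : ∀ x ∈ Pᶜ, g x = 1) : IsHard S :=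
  ⟨hS, ∅, isCompact_empty, fun _ _ _ => ⟨P, hP, g, hg, fun x hx => h0 x hx.1, h1⟩⟩

/-- Forward direction. -/
lemma stmt8_forward [T35Space Y] (hNP : NearlyPseudocompact Y) :
    ∀ f : Y → ℝ, Continuous f → IsHard (closure {x | f x ≠ 0}) →
      ∃ M : ℝ, ∀ x, |f x| ≤ M := by
  obtain ⟨X₁, X₂, hunion, -, -, hps, -, hX₂, -⟩ := hNP
  intro f hf hhard
  set S := closure {x | f x ≠ 0} with hSdef
  obtain ⟨hSclosed, K, hK, hKspec⟩ := hhard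
  have hSX₂ : S ∩ X₂ ⊆ K := by
    rintro y ⟨hyS, hyX₂⟩
    by_contra hyK
    obtain ⟨g₂, hg₂, hg₂y, hg₂K, -⟩ := bump_point_closed hK.isClosed hyK
    set V := {x | g₂ x < 1/2} with hV
    have hVopen : IsOpen V := isOpen_lt hg₂ continuous_const
    have hKV : K ⊆ V := fun x hx => by
      simp only [hV, mem_setOf_eq, hg₂K x hx]; norm_num
    obtain ⟨P, hP, g, hg, hg0, hg1⟩ := hKspec V hVopen hKV
    have hyV : y ∉ V := by
      simp only [hV, mem_setOf_eq, hg₂y]; norm_num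
    have hgy : g y = 0 := hg0 y ⟨hyS, hyV⟩
    have hPnhds : P ∈ nhds y := by
      refine Filter.mem_of_superset (IsOpen.mem_nhds (isOpen_lt hg continuous_const)
        (show g y < 1/2 by rw [hgy]; norm_num)) ?_
      intro x hx
      by_contra hxP
      rw [mem_setOf_eq, hg1 x hxP] at hx
      norm_num at hx
    exact hX₂ y hyX₂ ⟨P, hPnhds, hP⟩
  obtain ⟨M₁, hM₁⟩ := hps (fun z : ↥X₁ => f z) (hf.comp continuous_subtype_val)
  obtain ⟨M₂, hM₂⟩ := hK.bddAbove_image (f := fun x => |f x|)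
    ((continuous_abs.comp hf).continuousOn)
  refine ⟨max M₁ (max M₂ 0), fun x => ?_⟩
  have hx : x ∈ X₁ ∪ X₂ := hunion ▸ mem_univ x
  rcases hx with hx | hx
  · exact le_trans (hM₁ ⟨x, hx⟩) (le_max_left _ _)
  · by_cases hfx : f x = 0
    · rw [hfx, abs_zero]
      exact le_trans (le_max_right M₂ 0) (le_max_right _ _)
    · have hxK : x ∈ K := hSX₂ ⟨subset_closure hfx, hx⟩
      exact le_trans (le_trans (hM₂ (mem_image_of_mem _ hxK)) (le_max_left M₂ 0))
        (le_max_right _ _)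

end Aux4
section Aux5

variable {Y : Type*} [TopologicalSpace Y] [T35Space Y]

set_option maxHeartbeats 2000000 in
/-- Key construction: in an open set `O` with no locally compact points, a point with a
realcompact neighborhood inside `O` yields an unbounded function with hard support. -/
lemma unbounded_of_realcompact_nbhd {O : Set Y} (hO : IsOpen O)
    (hOL : ∀ y ∈ O, ¬ ∃ K : Set Y, IsCompact K ∧ K ∈ nhds y)
    {y : Y} (hyO : y ∈ O) {N : Set Y} (hN : N ∈ nhds y) (hNrc : IsRealcompact ↥N)
    (hCH : ∀ f : Y → ℝ, Continuous f → IsHard (closure {x | f x ≠ 0}) →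
      ∃ M : ℝ, ∀ x, |f x| ≤ M) : False := by
  classical
  set W := interior N ∩ O with hWdef
  have hWopen : IsOpen W := isOpen_interior.inter hO
  have hyW : y ∈ W := ⟨mem_interior_iff_mem_nhds.mpr hN, hyO⟩
  obtain ⟨f, hf, hfy, hfW, hfI⟩ := bump_point_closed hWopen.isClosed_compl (by simpa using hyW)
  have hfsub : ∀ c : ℝ, 0 < c → {x | c ≤ f x} ⊆ W := by
    intro c hc x hx
    by_contra hxW
    rw [mem_setOf_eq, hfW x hxW] at hx
    linarith
  set H : Set Y := {x | 3/4 ≤ f x} with hHdef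
  set H' : Set Y := {x | 1/2 ≤ f x} with hH'def
  set P : Set Y := {x | 1/4 ≤ f x} with hPdef
  have hHH' : H ⊆ H' := by
    intro x hx
    simp only [hH'def, hHdef, mem_setOf_eq] at hx ⊢
    linarith
  have hHclosed : IsClosed H := isClosed_le continuous_const hf
  have hH'closed : IsClosed H' := isClosed_le continuous_const hf
  have hPclosed : IsClosed P := isClosed_le continuous_const hf
  have hH'N : H' ⊆ N := (hfsub _ (by norm_num)).trans (inter_subset_left.trans interior_subset)
  have hPN : P ⊆ N := (hfsub _ (by norm_num)).trans (inter_subset_left.trans interior_subset)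
  have hH'rc : IsRealcompact ↥H' := realcompact_of_closed_subset hH'closed hH'N hNrc
  have hPrc : IsRealcompact ↥P := realcompact_of_closed_subset hPclosed hPN hNrc
  have hHnhds : H ∈ nhds y := by
    refine Filter.mem_of_superset (IsOpen.mem_nhds (isOpen_lt continuous_const hf)
      (show (3:ℝ)/4 < f y by rw [hfy]; norm_num)) ?_
    intro x hx
    simp only [mem_setOf_eq] at hx ⊢
    exact hx.le
  have hHnc : ¬ IsCompact H := fun hcpt => hOL y hyO ⟨H, hcpt, hHnhds⟩
  -- a cover of H by cozero sets with no finite subcover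
  rw [isCompact_iff_finite_subcover] at hHnc
  push_neg at hHnc
  obtain ⟨ι, U, hUopen, hUcov, hUnofin⟩ := hHnc
  set Coz : Set (Set Y) := {C | (∃ gc : Y → ℝ, Continuous gc ∧ C = {x | gc x ≠ 0}) ∧ ∃ i, C ⊆ U i}
    with hCoz
  have hcovC : H ⊆ ⋃₀ Coz := by
    intro x hx
    obtain ⟨i, hi⟩ := mem_iUnion.mp (hUcov hx)
    obtain ⟨b, hb, hbx, hbU, -⟩ := bump_point_closed (hUopen i).isClosed_compl
      (by simpa using hi)
    refine ⟨{z | b z ≠ 0}, ⟨⟨b, hb, rfl⟩, i, ?_⟩, by simp [hbx]⟩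
    intro z hz
    by_contra hzU
    exact hz (hbU z hzU)
  have hnofin : ∀ t : Finset (Set Y), (∀ C ∈ t, C ∈ Coz) → ¬ H ⊆ ⋃₀ ↑t := by
    intro t ht hsub
    set t' : Finset ι := t.attach.image fun C => (ht C.1 C.2).2.choose with ht'
    refine hUnofin t' ?_
    intro x hx
    obtain ⟨C, hCt, hxC⟩ := hsub hx
    refine mem_iUnion₂.mpr ⟨(ht C hCt).2.choose, ?_, (ht C hCt).2.choose_spec hxC⟩
    exact Finset.mem_image.mpr ⟨⟨C, hCt⟩, Finset.mem_attach _ _, rfl⟩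
  have hHzero : IsZeroSet H := isZeroSet_ge hf _
  -- the z-filter of zero sets almost containing H
  set F₀ : Set (Set Y) :=
    {Z | IsZeroSet Z ∧ ∃ t : Finset (Set Y), (∀ C ∈ t, C ∈ Coz) ∧ H \ ⋃₀ ↑t ⊆ Z} with hF₀
  have hF₀zf : IsZFilter F₀ := by
    refine ⟨fun Z hZ => hZ.1, ?_, ⟨isZeroSet_univ, ∅, by simp, subset_univ _⟩, ?_, ?_⟩
    · rintro ⟨-, t, ht, hsub⟩
      refine hnofin t ht fun x hx => ?_
      by_contra hxt
      exact (hsub ⟨hx, hxt⟩ : _)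
    · rintro Z₁ ⟨hz₁, t₁, ht₁, h₁⟩ Z₂ ⟨hz₂, t₂, ht₂, h₂⟩
      refine ⟨hz₁.inter hz₂, t₁ ∪ t₂, ?_, ?_⟩
      · intro C hC
        rcases Finset.mem_union.mp hC with h | h
        · exact ht₁ C h
        · exact ht₂ C h
      · intro x hx
        rw [Finset.coe_union, sUnion_union] at hx
        exact ⟨h₁ ⟨hx.1, fun h => hx.2 (Or.inl h)⟩, h₂ ⟨hx.1, fun h => hx.2 (Or.inr h)⟩⟩
    · rintro Z₁ ⟨hz₁, t₁, ht₁, h₁⟩ Z₂ hz₂ hsub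
      exact ⟨hz₂, t₁, ht₁, h₁.trans hsub⟩
  have hHF₀ : H ∈ F₀ := ⟨hHzero, ∅, by simp, by simp⟩
  obtain ⟨F, hF, hF₀F⟩ := hF₀zf.exists_zultrafilter
  have hHF : H ∈ F := hF₀F hHF₀
  have hunfixed : ¬ IsFixedFamily F := by
    rintro ⟨p, hp⟩
    have hpH : p ∈ H := hp H hHF
    obtain ⟨C, hCCoz, hpC⟩ := hcovC hpH
    obtain ⟨hCz, hCU⟩ := id hCCoz
    obtain ⟨gc, hgc, rfl⟩ := hCz
    have hDF : {x | gc x = 0} ∈ F₀ := by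
      refine ⟨⟨gc, hgc, rfl⟩, {{x | gc x ≠ 0}}, ?_, ?_⟩
      · intro C' hC'
        rw [Finset.mem_singleton] at hC'
        subst hC'
        exact hCCoz
      · intro x hx
        simp only [Finset.coe_singleton, sUnion_singleton, mem_diff, mem_setOf_eq] at hx
        simpa using hx.2
    exact hpC (hp _ (hF₀F hDF))
  -- restrict to H'
  set G1 : Set (Set ↥H') := {Wz | IsZeroSet Wz ∧ ∃ Z ∈ F, ((↑) : ↥H' → Y) ⁻¹' Z ⊆ Wz} with hG1
  have hG1zf : IsZFilter G1 := by
    refine ⟨fun Z hZ => hZ.1, ?_, ⟨isZeroSet_univ, univ, hF.1.2.2.1, subset_univ _⟩, ?_, ?_⟩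
    · rintro ⟨-, Z, hZF, hsub⟩
      have hZH : Z ∩ H ∈ F := hF.1.2.2.2.1 _ hZF _ hHF
      obtain ⟨x, hxZ, hxH⟩ := hF.1.nonempty_of_mem hZH
      exact hsub (show (⟨x, hHH' hxH⟩ : ↥H') ∈ _ from hxZ)
    · rintro Z₁ ⟨hz₁, W₁, hW₁, h₁⟩ Z₂ ⟨hz₂, W₂, hW₂, h₂⟩
      refine ⟨hz₁.inter hz₂, W₁ ∩ W₂, hF.1.2.2.2.1 _ hW₁ _ hW₂, ?_⟩
      rw [preimage_inter]
      exact inter_subset_inter h₁ h₂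
    · rintro Z₁ ⟨hz₁, W₁, hW₁, h₁⟩ Z₂ hz₂ hsub
      exact ⟨hz₂, W₁, hW₁, h₁.trans hsub⟩
  obtain ⟨F', hF', hG1F'⟩ := hG1zf.exists_zultrafilter
  have hpre : ∀ Z ∈ F, ((↑) : ↥H' → Y) ⁻¹' Z ∈ F' := fun Z hZ =>
    hG1F' ⟨(hF.1.1 Z hZ).preimage continuous_subtype_val, Z, hZ, subset_rfl⟩
  have hF'unfixed : ¬ IsFixedFamily F' := by
    rintro ⟨q, hq⟩
    exact hunfixed ⟨(q : Y), fun Z hZ => hq _ (hpre Z hZ)⟩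
  have hF'CIP : ¬ HasCIP F' := fun h => hF'unfixed (hH'rc F' hF' h)
  rw [HasCIP] at hF'CIP
  push_neg at hF'CIP
  obtain ⟨s, hsF', hsne⟩ := hF'CIP
  rw [← not_nonempty_iff_eq_empty] at hsne
  rw [not_nonempty_iff_eq_empty] at hsne
  -- decreasing sequence of zero sets of H', inside H, with empty intersection
  set Wseq : ℕ → Set ↥H' := fun n =>
    (⋂ k ∈ Finset.range (n+1), s k) ∩ (((↑) : ↥H' → Y) ⁻¹' H) with hWseq
  have hWmem : ∀ n, Wseq n ∈ F' :=
    fun n => hF'.1.2.2.2.1 _ (hF'.1.finite_iInter hsF') _ (hpre H hHF)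
  have hWdec : ∀ {m n}, m ≤ n → Wseq n ⊆ Wseq m := by
    intro m n hmn x hx
    refine ⟨?_, hx.2⟩
    have := hx.1
    rw [mem_iInter₂] at this ⊢
    intro k hk
    exact this k (Finset.mem_range.mpr (lt_of_lt_of_le (Finset.mem_range.mp hk)
      (Nat.succ_le_succ hmn)))
  have hWempty : (⋂ n, Wseq n) = ∅ := by
    rw [← subset_empty_iff, ← hsne]
    intro x hx
    rw [mem_iInter] at hx ⊢
    intro n
    exact mem_iInter₂.mp (hx n).1 n (Finset.mem_range.mpr (Nat.lt_succ_self n))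
  have hWH : ∀ n, Wseq n ⊆ ((↑) : ↥H' → Y) ⁻¹' H := fun n => inter_subset_right
  -- build the unbounded function
  have hWzero : ∀ n, ∃ h : ↥H' → ℝ, Continuous h ∧ Wseq n = {x | h x = 0} :=
    fun n => hF'.1.1 _ (hWmem n)
  choose hfn hfncont hfneq using hWzero
  set u : ↥H' → ℝ := fun x => ∑' n, (1/2 : ℝ)^n * min |hfn n x| 1 with hu
  have hterm_nonneg : ∀ n (x : ↥H'), 0 ≤ (1/2 : ℝ)^n * min |hfn n x| 1 :=
    fun n x => mul_nonneg (by positivity) (le_min (abs_nonneg _) zero_le_one)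
  have hterm_bound : ∀ n (x : ↥H'), ‖(1/2 : ℝ)^n * min |hfn n x| 1‖ ≤ (1/2)^n := by
    intro n x
    rw [Real.norm_eq_abs, abs_of_nonneg (hterm_nonneg n x)]
    have h1 : min |hfn n x| 1 ≤ 1 := min_le_right _ _
    have h2 : (0:ℝ) ≤ (1/2)^n := by positivity
    nlinarith
  have hucont : Continuous u := by
    refine continuous_tsum (fun n => ?_) summable_geometric_two hterm_bound
    exact continuous_const.mul (((hfncont n).abs).min continuous_const)
  have husummable : ∀ x : ↥H', Summable fun n => (1/2 : ℝ)^n * min |hfn n x| 1 := by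
    intro x
    refine Summable.of_nonneg_of_le (fun n => hterm_nonneg n x) (fun n => ?_) summable_geometric_two
    have := hterm_bound n x
    rwa [Real.norm_eq_abs, abs_of_nonneg (hterm_nonneg n x)] at this
  have hupos : ∀ x : ↥H', 0 < u x := by
    intro x
    have hx : x ∉ ⋂ n, Wseq n := by rw [hWempty]; exact notMem_empty x
    rw [mem_iInter] at hx
    push_neg at hx
    obtain ⟨n, hn⟩ := hx
    have hhn : hfn n x ≠ 0 := by
      intro h
      exact hn (by rw [hfneq n]; exact h)
    have hterm_pos : 0 < (1/2 : ℝ)^n * min |hfn n x| 1 :=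
      mul_pos (by positivity) (lt_min (abs_pos.mpr hhn) one_pos)
    exact lt_of_lt_of_le hterm_pos (Summable.le_tsum (husummable x) n fun m _ => hterm_nonneg m x)
  have hubound : ∀ n (x : ↥H'), x ∈ Wseq n → u x ≤ (1/2)^n := by
    intro n x hx
    have hvanish : ∀ k ∈ Finset.range (n+1), (1/2 : ℝ)^k * min |hfn k x| 1 = 0 := by
      intro k hk
      have hxk : x ∈ Wseq k := hWdec (Nat.lt_succ_iff.mp (Finset.mem_range.mp hk)) hx
      rw [hfneq k, mem_setOf_eq] at hxk
      rw [hxk]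
      simp
    have h1 : u x = ∑' k, (1/2 : ℝ)^(k+(n+1)) * min |hfn (k+(n+1)) x| 1 := by
      rw [hu]
      dsimp only
      rw [← Summable.sum_add_tsum_nat_add (n+1) (husummable x), Finset.sum_eq_zero hvanish, zero_add]
    have h2 : ∑' k, (1/2 : ℝ)^(k+(n+1)) * min |hfn (k+(n+1)) x| 1
        ≤ ∑' k, (1/2 : ℝ)^(k+(n+1)) := by
      refine Summable.tsum_le_tsum (fun k => ?_) ((summable_nat_add_iff (n+1)).mpr (husummable x))
        ((summable_nat_add_iff (n+1)).mpr summable_geometric_two)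
      have := hterm_bound (k+(n+1)) x
      rwa [Real.norm_eq_abs, abs_of_nonneg (hterm_nonneg _ x)] at this
    have h3 : ∑' k, (1/2 : ℝ)^(k+(n+1)) = (1/2 : ℝ)^(n+1) * 2 := by
      simp_rw [pow_add]
      rw [tsum_mul_right, tsum_geometric_of_lt_one (by norm_num) (by norm_num)]
      norm_num [mul_comm]
    have h4 : ((1:ℝ)/2)^(n+1) * 2 = (1/2)^n := by
      rw [pow_succ]
      ring
    rw [h1]
    calc ∑' k, (1/2 : ℝ)^(k+(n+1)) * min |hfn (k+(n+1)) x| 1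
        ≤ ∑' k, (1/2 : ℝ)^(k+(n+1)) := h2
      _ = (1/2 : ℝ)^(n+1) * 2 := h3
      _ = (1/2 : ℝ)^n := h4
  -- the cut-off and the unbounded function
  set φ : ℝ → ℝ := fun t => min 1 (max 0 (8*(t - 5/8))) with hφ
  have hφcont : Continuous φ :=
    continuous_const.min (continuous_const.max
      (continuous_const.mul (continuous_id.sub continuous_const)))
  have hφ0 : ∀ t : ℝ, t < 5/8 → φ t = 0 := by
    intro t ht
    rw [hφ]
    dsimp only
    rw [max_eq_left (by nlinarith), min_eq_right (le_refl 0 |>.trans zero_le_one)]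
  have hφ1 : ∀ t : ℝ, 3/4 ≤ t → φ t = 1 := by
    intro t ht
    rw [hφ]
    dsimp only
    rw [max_eq_right (by nlinarith), min_eq_left (by nlinarith)]
  set G : Y → ℝ := fun x => if hx : x ∈ H' then φ (f x) * (u ⟨x, hx⟩)⁻¹ else 0 with hG
  have hGzero : ∀ x, f x < 5/8 → G x = 0 := by
    intro x hx
    rw [hG]
    dsimp only
    split_ifs with h
    · rw [hφ0 _ hx, zero_mul]
    · rfl
  have hGcont : Continuous G := by
    rw [continuous_iff_continuousAt]
    intro x₀
    by_cases hx₀ : f x₀ < 5/8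
    · have hev : G =ᶠ[nhds x₀] (fun _ => (0:ℝ)) :=
        Filter.eventuallyEq_of_mem ((isOpen_lt hf continuous_const).mem_nhds hx₀)
          fun x hx => hGzero x hx
      exact (continuousAt_congr hev).mpr continuousAt_const
    · push_neg at hx₀
      set O₁ : Set Y := {x | 1/2 < f x} with hO₁
      have hO₁open : IsOpen O₁ := isOpen_lt continuous_const hf
      have hx₀O₁ : x₀ ∈ O₁ := by
        rw [hO₁, mem_setOf_eq]
        linarith
      have hrestrict : ContinuousOn G O₁ := by
        rw [continuousOn_iff_continuous_restrict]
        have heq : (O₁.domRestrict G) = fun z : ↥O₁ =>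
            φ (f z) * (u ⟨z.1, le_of_lt (show (1:ℝ)/2 < f z.1 from z.2)⟩)⁻¹ := by
          funext z
          simp only [domRestrict, hG]
          rw [dif_pos (show (z : Y) ∈ H' from le_of_lt (show (1:ℝ)/2 < f z.1 from z.2))]
        rw [heq]
        refine (hφcont.comp (hf.comp continuous_subtype_val)).mul (Continuous.inv₀ ?_ ?_)
        · exact hucont.comp (continuous_subtype_val.subtype_mk _)
        · exact fun z => ne_of_gt (hupos _)
      exact hrestrict.continuousAt (hO₁open.mem_nhds hx₀O₁)
  have hsupp : {x | G x ≠ 0} ⊆ {x | 5/8 ≤ f x} := by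
    intro x hx
    rw [mem_setOf_eq] at hx ⊢
    by_contra hc
    push_neg at hc
    exact hx (hGzero x hc)
  have hShard : IsHard (closure {x | G x ≠ 0}) := by
    refine isHard_of_sep isClosed_closure hPrc
      (g := fun x => min 1 (max 0 (4*(1/2 - f x)))) ?_ ?_ ?_
    · exact continuous_const.min (continuous_const.max
        (continuous_const.mul (continuous_const.sub hf)))
    · intro x hxS
      have hx : x ∈ {x | 5/8 ≤ f x} :=
        closure_minimal hsupp (isClosed_le continuous_const hf) hxS
      rw [mem_setOf_eq] at hx
      show (min 1 (max 0 (4*(1/2 - f x))) : ℝ) = 0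
      rw [max_eq_left (by nlinarith), min_eq_right (le_refl 0 |>.trans zero_le_one)]
    · intro x hxP
      have hfx : f x < 1/4 := by
        by_contra h
        push_neg at h
        exact hxP h
      show (min 1 (max 0 (4*(1/2 - f x))) : ℝ) = 1
      rw [max_eq_right (by nlinarith), min_eq_left (by nlinarith)]
  obtain ⟨M, hM⟩ := hCH G hGcont hShard
  obtain ⟨n, hn⟩ := pow_unbounded_of_one_lt M (by norm_num : (1:ℝ) < 2)
  obtain ⟨z, hz⟩ := hF'.1.nonempty_of_mem (hWmem n)
  have hzH : (z : Y) ∈ H := hWH n hz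
  have hφz : φ (f z) = 1 := hφ1 _ hzH
  have hGz : G ↑z = (u z)⁻¹ := by
    rw [hG]
    dsimp only
    rw [dif_pos (z.2 : (z:Y) ∈ H')]
    rw [show (⟨(z:Y), z.2⟩ : ↥H') = z from Subtype.ext rfl, hφz, one_mul]
  have hub : u z ≤ (1/2)^n := hubound n z hz
  have hlow : (2:ℝ)^n ≤ (u z)⁻¹ := by
    have h1 : ((1/2 : ℝ)^n)⁻¹ ≤ (u z)⁻¹ := by
      apply inv_anti₀ (hupos z) hub
    have h2 : ((1/2 : ℝ)^n)⁻¹ = 2^n := by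
      rw [one_div, inv_pow, inv_inv]
    rwa [h2] at h1
  have : M < |G ↑z| := by
    rw [hGz, abs_of_pos (inv_pos.mpr (hupos z))]
    linarith
  exact absurd (hM ↑z) (not_le.mpr this)

end Aux5
section Aux6

variable {Y : Type*} [TopologicalSpace Y]

lemma summable_of_locallyFinite {β : ℕ → Y → ℝ} {V : ℕ → Set Y} (hLF : LocallyFinite V)
    (hsupp : ∀ n x, β n x ≠ 0 → x ∈ V n) (x : Y) : Summable (fun n => β n x) := by
  classical
  obtain ⟨t, htn, hfin⟩ := hLF x
  refine summable_of_ne_finset_zero (s := hfin.toFinset) ?_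
  intro n hn
  by_contra hne
  exact hn (hfin.mem_toFinset.mpr ⟨x, hsupp n x hne, mem_of_mem_nhds htn⟩)

lemma continuous_tsum_of_locallyFinite {β : ℕ → Y → ℝ} (hcont : ∀ n, Continuous (β n))
    {V : ℕ → Set Y} (hLF : LocallyFinite V) (hsupp : ∀ n x, β n x ≠ 0 → x ∈ V n) :
    Continuous (fun x => ∑' n, β n x) := by
  classical
  rw [continuous_iff_continuousAt]
  intro p
  obtain ⟨t, htn, hfin⟩ := hLF p
  have hev : (fun x => ∑' n, β n x) =ᶠ[nhds p] (fun x => ∑ n ∈ hfin.toFinset, β n x) := by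
    refine Filter.eventually_of_mem htn fun x hx => ?_
    refine tsum_eq_sum ?_
    intro n hn
    by_contra hne
    exact hn (hfin.mem_toFinset.mpr ⟨x, hsupp n x hne, hx⟩)
  exact (continuousAt_congr hev).mpr (continuous_finset_sum _ fun n _ => (hcont n)).continuousAt

end Aux6
section Aux7

variable {Y : Type*} [TopologicalSpace Y] [T35Space Y]

set_option maxHeartbeats 2000000 in
/-- If every continuous function with hard support is bounded, then the closure of the set of
points with compact neighborhoods is pseudocompact. -/
lemma pseudocompact_closure_of_CH
    (hCH : ∀ f : Y → ℝ, Continuous f → IsHard (closure {x | f x ≠ 0}) →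
      ∃ M : ℝ, ∀ x, |f x| ≤ M) :
    IsPseudocompact ↥(closure {y : Y | ∃ K : Set Y, IsCompact K ∧ K ∈ nhds y}) := by
  classical
  set L : Set Y := {y : Y | ∃ K : Set Y, IsCompact K ∧ K ∈ nhds y} with hLdef
  set X₁ : Set Y := closure L with hX₁
  intro g hg
  by_contra hunb
  push_neg at hunb
  -- a sequence of points where |g| grows with gaps
  have hstep : ∀ c : ℝ, ∃ z : ↥X₁, c < |g z| := fun c => hunb c
  set zrec : ℕ → ↥X₁ :=
    fun n => Nat.rec (hstep 1).choose (fun _ prev => (hstep (|g prev| + 2)).choose) n with hzrec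
  set v : ℕ → ℝ := fun n => |g (zrec n)| with hv
  have hv0 : 1 < v 0 := (hstep 1).choose_spec
  have hvstep : ∀ n, v n + 2 < v (n+1) := fun n => (hstep (|g (zrec n)| + 2)).choose_spec
  have hvmono : ∀ m n, m < n → v m + 2 ≤ v n := by
    intro m n hmn
    induction n with
    | zero => omega
    | succ k ih =>
        rcases Nat.lt_succ_iff_lt_or_eq.mp hmn with h | h
        · have := hvstep k
          have := ih h
          linarith [hvstep k]
        · subst h
          linarith [hvstep m]
  have hvlarge : ∀ n : ℕ, 1 + 2*(n:ℝ) < v n := by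
    intro n
    induction n with
    | zero => simpa using hv0
    | succ k ih =>
        have := hvstep k
        push_cast
        push_cast at ih
        linarith
  -- the level sets
  have hWopen : ∀ n, IsOpen {w : ↥X₁ | |g w| ∈ Ioo (v n - 1) (v n + 1)} := by
    intro n
    exact (isOpen_Ioo).preimage (continuous_abs.comp hg)
  have hU : ∀ n, ∃ U : Set Y, IsOpen U ∧
      ((↑) : ↥X₁ → Y) ⁻¹' U = {w : ↥X₁ | |g w| ∈ Ioo (v n - 1) (v n + 1)} := by
    intro n
    obtain ⟨U, hUo, hUeq⟩ := isOpen_induced_iff.mp (hWopen n)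
    exact ⟨U, hUo, hUeq⟩
  choose U hUopen hUeq using hU
  have hzU : ∀ n, (zrec n : Y) ∈ U n := by
    intro n
    have : zrec n ∈ ((↑) : ↥X₁ → Y) ⁻¹' (U n) := by
      rw [hUeq n]
      exact ⟨by linarith [abs_nonneg (g (zrec n))], by linarith⟩
    exact this
  -- points of L in the level sets
  have hxL : ∀ n, ∃ x, x ∈ U n ∩ L := by
    intro n
    have hcl : (zrec n : Y) ∈ closure L := (zrec n).2
    exact mem_closure_iff.mp hcl (U n) (hUopen n) (hzU n)
  choose x hxU hxLmem using fun n => (hxL n)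
  choose K hKcpt hKnhds using fun n => (hxLmem n)
  set V : ℕ → Set Y := fun n => L ∩ U n ∩ interior (K n) with hV
  have hVopen : ∀ n, IsOpen (V n) := by
    intro n
    have hLopen : IsOpen L := by
      rw [isOpen_iff_mem_nhds]
      intro z ⟨Kz, hKz, hKzn⟩
      refine Filter.mem_of_superset (interior_mem_nhds.mpr hKzn) ?_
      intro w hw
      exact ⟨Kz, hKz, mem_nhds_iff.mpr ⟨interior Kz, interior_subset, isOpen_interior, hw⟩⟩
    exact (hLopen.inter (hUopen n)).inter isOpen_interior
  have hxV : ∀ n, x n ∈ V n := fun n =>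
    ⟨⟨hxLmem n, hxU n⟩, mem_interior_iff_mem_nhds.mpr (hKnhds n)⟩
  -- bumps
  have hb : ∀ n, ∃ b : Y → ℝ, Continuous b ∧ b (x n) = 1 ∧ (∀ a ∈ (V n)ᶜ, b a = 0) ∧
      ∀ z, b z ∈ Icc (0:ℝ) 1 :=
    fun n => bump_point_closed (hVopen n).isClosed_compl (by simp [hxV n])
  choose b hbcont hbx hbV hbI using hb
  set β : ℕ → Y → ℝ := fun n z => v n * max 0 (2 * b n z - 1) with hβ
  have hβcont : ∀ n, Continuous (β n) :=
    fun n => continuous_const.mul (continuous_const.max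
      ((continuous_const.mul (hbcont n)).sub continuous_const))
  have hβsupp : ∀ n z, β n z ≠ 0 → z ∈ V n := by
    intro n z hz
    by_contra hzV
    apply hz
    rw [hβ]
    dsimp only
    rw [hbV n z hzV]
    norm_num
  have hβnonneg : ∀ n z, 0 ≤ β n z := by
    intro n z
    have h1 : (0:ℝ) ≤ (n:ℕ) := Nat.cast_nonneg n
    have h2 := hvlarge n
    exact mul_nonneg (by linarith) (le_max_left _ _)
  have hβx : ∀ n, β n (x n) = v n := by
    intro n
    rw [hβ]
    dsimp only
    rw [hbx n]
    norm_num
  set γ : ℕ → Y → ℝ := fun n z => min 1 (2 * b n z) with hγ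
  have hγcont : ∀ n, Continuous (γ n) :=
    fun n => continuous_const.min (continuous_const.mul (hbcont n))
  have hγsupp : ∀ n z, γ n z ≠ 0 → z ∈ V n := by
    intro n z hz
    by_contra hzV
    apply hz
    rw [hγ]
    dsimp only
    rw [hbV n z hzV]
    norm_num
  have hγnonneg : ∀ n z, 0 ≤ γ n z := fun n z =>
    le_min zero_le_one (by linarith [(hbI n z).1])
  -- local finiteness
  have hLF : LocallyFinite V := by
    intro q
    by_cases hq : q ∈ X₁
    · set c : ℝ := |g ⟨q, hq⟩| with hc
      have hWq : IsOpen {w : ↥X₁ | |g w| ∈ Ioo (c - 1/2) (c + 1/2)} :=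
        (isOpen_Ioo).preimage (continuous_abs.comp hg)
      obtain ⟨U', hU'o, hU'eq⟩ := isOpen_induced_iff.mp hWq
      have hqU' : q ∈ U' := by
        have : (⟨q, hq⟩ : ↥X₁) ∈ ((↑) : ↥X₁ → Y) ⁻¹' U' := by
          rw [hU'eq]
          exact ⟨by linarith [hv0], by linarith⟩
        exact this
      obtain ⟨Nb, hNb⟩ := exists_nat_gt ((c + 1/2)/2)
      refine ⟨U', hU'o.mem_nhds hqU', ?_⟩
      refine Set.Finite.subset (Set.finite_Iio Nb) ?_
      intro n hn
      obtain ⟨z, hzV, hzU'⟩ := hn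
      have hzX₁ : z ∈ X₁ := subset_closure hzV.1.1
      have hzWn : (⟨z, hzX₁⟩ : ↥X₁) ∈ ((↑) : ↥X₁ → Y) ⁻¹' (U n) := hzV.1.2
      rw [hUeq n] at hzWn
      have hzWq : (⟨z, hzX₁⟩ : ↥X₁) ∈ ((↑) : ↥X₁ → Y) ⁻¹' U' := hzU'
      rw [hU'eq] at hzWq
      obtain ⟨h1, h2⟩ := hzWn
      obtain ⟨h3, h4⟩ := hzWq
      have hvn : v n < c + 3/2 := by linarith
      have := hvlarge n
      have hlt : (n:ℝ) < (c + 1/2)/2 := by linarith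
      have hnNb : (n:ℝ) < Nb := lt_trans hlt hNb
      simp only [mem_Iio]
      exact_mod_cast hnNb
    · refine ⟨X₁ᶜ, (isOpen_compl_iff.mpr isClosed_closure).mem_nhds hq, ?_⟩
      refine Set.Finite.subset (Set.finite_empty) ?_
      intro n hn
      obtain ⟨z, hzV, hzc⟩ := hn
      exact absurd (subset_closure hzV.1.1) hzc
  -- the function G
  set G : Y → ℝ := fun z => ∑' n, β n z with hGdef
  have hGsummable : ∀ z, Summable (fun n => β n z) :=
    summable_of_locallyFinite hLF hβsupp
  have hGcont : Continuous G := continuous_tsum_of_locallyFinite hβcont hLF hβsupp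
  have hGnonneg : ∀ z, 0 ≤ G z := fun z => tsum_nonneg (fun n => hβnonneg n z)
  have hGge : ∀ n, v n ≤ G (x n) := by
    intro n
    rw [hGdef]
    dsimp only
    rw [← hβx n]
    exact Summable.le_tsum (hGsummable (x n)) n fun m _ => hβnonneg m (x n)
  -- the support of G is hard
  have hclV : ∀ n, closure (V n) ⊆ K n := by
    intro n
    refine closure_minimal ?_ (hKcpt n).isClosed
    exact inter_subset_right.trans interior_subset
  have hclVcpt : ∀ n, IsCompact (closure (V n)) := fun n =>
    (hKcpt n).of_isClosed_subset isClosed_closure (hclV n)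
  set P : Set Y := ⋃ n, closure (V n) with hP
  have hPrc : IsRealcompact ↥P := by
    refine realcompact_of_sigma_compact hclVcpt (fun n => ?_) (by rw [hP])
    rw [hP]
    exact subset_iUnion (fun m => closure (V m)) n
  have hsupp : {z | G z ≠ 0} ⊆ ⋃ n, {z | β n z ≠ 0} := by
    intro z hz
    by_contra hc
    simp only [mem_iUnion, mem_setOf_eq, not_exists, not_not] at hc
    apply hz
    rw [hGdef]
    dsimp only
    calc ∑' n, β n z = ∑' _ : ℕ, (0:ℝ) := tsum_congr hc
      _ = 0 := tsum_zero
  have hLF' : LocallyFinite (fun n => {z | β n z ≠ 0}) :=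
    hLF.subset (fun n z hz => hβsupp n z hz)
  have hSsub : closure {z | G z ≠ 0} ⊆ ⋃ n, closure {z | β n z ≠ 0} := by
    rw [← hLF'.closure_iUnion]
    exact closure_mono hsupp
  have hSP0 : ∀ n, closure {z | β n z ≠ 0} ⊆ {z | 1/2 ≤ b n z} := by
    intro n
    refine closure_minimal ?_ (isClosed_le continuous_const (hbcont n))
    intro z hz
    rw [mem_setOf_eq] at hz ⊢
    by_contra hb2
    push_neg at hb2
    apply hz
    rw [hβ]
    dsimp only
    rw [max_eq_left (by linarith), mul_zero]
  have hγsummable : ∀ z, Summable (fun n => γ n z) :=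
    summable_of_locallyFinite hLF hγsupp
  have hS0 : ∀ z ∈ closure {z | G z ≠ 0}, (1 : ℝ) - min 1 (∑' n, γ n z) = 0 := by
    intro z hz
    obtain ⟨n, hn⟩ := mem_iUnion.mp (hSsub hz)
    have hbz : 1/2 ≤ b n z := hSP0 n hn
    have hγ1 : γ n z = 1 := by
      rw [hγ]
      dsimp only
      rw [min_eq_left (by linarith)]
    have hle := Summable.le_tsum (hγsummable z) n (fun m _ => hγnonneg m z)
    have hsum : 1 ≤ ∑' m, γ m z := by
      rw [hγ1] at hle
      exact hle
    rw [min_eq_left hsum, sub_self]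
  have hS1 : ∀ z ∈ Pᶜ, (1:ℝ) - min 1 (∑' n, γ n z) = 1 := by
    intro z hz
    have hγ0 : ∀ n, γ n z = 0 := by
      intro n
      by_contra hne
      exact hz (mem_iUnion.mpr ⟨n, subset_closure (hγsupp n z hne)⟩)
    have hzero : ∑' n, γ n z = 0 := by
      calc ∑' n, γ n z = ∑' _ : ℕ, (0:ℝ) := tsum_congr hγ0
        _ = 0 := tsum_zero
    rw [hzero, min_eq_right zero_le_one, sub_zero]
  have hhard : IsHard (closure {z | G z ≠ 0}) := by
    refine isHard_of_sep isClosed_closure hPrc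
      (g := fun z => 1 - min 1 (∑' n, γ n z)) ?_ hS0 hS1
    exact continuous_const.sub (continuous_const.min
      (continuous_tsum_of_locallyFinite hγcont hLF hγsupp))
  obtain ⟨M, hM⟩ := hCH G hGcont hhard
  obtain ⟨n, hn⟩ := exists_nat_gt M
  have hlt : M < |G (x n)| := by
    rw [abs_of_nonneg (hGnonneg (x n))]
    have h1 := hGge n
    have h2 := hvlarge n
    linarith
  exact absurd (hM (x n)) (not_le.mpr hlt)

end Aux7
set_option maxHeartbeats 1000000 in
/-- X nearly pseudocompact iff every continuous real function with hard
support is bounded. -/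
theorem stmt8 [TopologicalSpace X] [T35Space X] :
    NearlyPseudocompact X ↔
      ∀ f : X → ℝ, Continuous f → IsHard (closure {x | f x ≠ 0}) →
        ∃ M : ℝ, ∀ x, |f x| ≤ M := by
  constructor
  · exact stmt8_forward
  · intro hCH
    set L : Set X := {y : X | ∃ K : Set X, IsCompact K ∧ K ∈ nhds y} with hLdef
    set R : Set X := {y : X | ∃ N ∈ nhds y, IsRealcompact ↥N} with hRdef
    have hLopen : IsOpen L := by
      rw [isOpen_iff_mem_nhds]
      rintro z ⟨K, hK, hKn⟩
      refine Filter.mem_of_superset (interior_mem_nhds.mpr hKn) fun w hw => ?_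
      exact ⟨K, hK, mem_nhds_iff.mpr ⟨interior K, interior_subset, isOpen_interior, hw⟩⟩
    have hRopen : IsOpen R := by
      rw [isOpen_iff_mem_nhds]
      rintro z ⟨N, hN, hrc⟩
      refine Filter.mem_of_superset (interior_mem_nhds.mpr hN) fun w hw => ?_
      exact ⟨N, mem_nhds_iff.mpr ⟨interior N, interior_subset, isOpen_interior, hw⟩, hrc⟩
    refine ⟨closure L, closure (interior Rᶜ), ?_, ?_, rfl, ?_, ?_, ?_, ?_⟩
    · -- union is everything
      by_contra hne
      have : ∃ y₀, y₀ ∉ closure L ∪ closure (interior Rᶜ) := by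
        by_contra hall
        push_neg at hall
        exact hne (eq_univ_iff_forall.mpr hall)
      obtain ⟨y₀, hy₀⟩ := this
      set O : Set X := (closure L)ᶜ ∩ (closure (interior Rᶜ))ᶜ with hO
      have hOopen : IsOpen O :=
        (isOpen_compl_iff.mpr isClosed_closure).inter (isOpen_compl_iff.mpr isClosed_closure)
      have hy₀O : y₀ ∈ O := ⟨fun h => hy₀ (Or.inl h), fun h => hy₀ (Or.inr h)⟩
      have hOL : ∀ y ∈ O, ¬ ∃ K : Set X, IsCompact K ∧ K ∈ nhds y := by
        intro y hy hK
        exact hy.1 (subset_closure hK)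
      have hOR : O ⊆ closure R := by
        intro z hz
        by_contra hzR
        have hsub : (closure R)ᶜ ⊆ interior Rᶜ :=
          interior_maximal (compl_subset_compl.mpr subset_closure)
            (isOpen_compl_iff.mpr isClosed_closure)
        exact hz.2 (subset_closure (hsub hzR))
      obtain ⟨y, hyO, hyR⟩ := mem_closure_iff.mp (hOR hy₀O) O hOopen hy₀O
      obtain ⟨N, hN, hNrc⟩ := hyR
      exact unbounded_of_realcompact_nbhd hOopen hOL hyO hN hNrc hCH
    · -- regular closed X₁
      refine subset_antisymm ?_ ?_
      · exact closure_mono (interior_maximal subset_closure hLopen)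
      · exact closure_minimal interior_subset isClosed_closure
    · -- pseudocompact X₁
      exact pseudocompact_closure_of_CH hCH
    · -- regular closed X₂
      refine subset_antisymm ?_ ?_
      · exact closure_mono (interior_maximal subset_closure isOpen_interior)
      · exact closure_minimal interior_subset isClosed_closure
    · -- no realcompact neighborhoods on X₂
      intro y hy
      have hyRc : y ∈ Rᶜ :=
        closure_minimal interior_subset (isClosed_compl_iff.mpr hRopen) hy
      exact fun h => hyRc h
    · -- interior of intersection empty
      by_contra hne
      obtain ⟨q, hq⟩ := nonempty_iff_ne_empty.mpr hne
      have hqX₁ : q ∈ closure L := (interior_subset hq).1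
      obtain ⟨z, hzI, hzL⟩ := mem_closure_iff.mp hqX₁ _ isOpen_interior hq
      obtain ⟨K, hKcpt, hKn⟩ := hzL
      have hKrc : IsRealcompact ↥K :=
        realcompact_of_sigma_compact (C := fun _ : ℕ => K) (fun _ => hKcpt)
          (fun _ => subset_rfl) (fun x hx => mem_iUnion.mpr ⟨0, hx⟩)
      have hzR : z ∈ R := ⟨K, hKn, hKrc⟩
      have hzX₂ : z ∈ closure (interior Rᶜ) := (interior_subset hzI).2
      have hzRc : z ∈ Rᶜ :=
        closure_minimal interior_subset (isClosed_compl_iff.mpr hRopen) hzX₂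
      exact hzRc hzR
end
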